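/- (Schütte) Let n ≥ 1 and let S be a set of at least n+2 points in Euclidean space ℓ_2^n. Then the ratio (max_{x,y ∈ S} ‖x−y‖_2) / (min_{x,y ∈ S, x≠y} ‖x−y‖_2) is at least (1 + 2/n)^{1/2} if n is even, and at least (1 + 2/(n − (n+2)^{−1}))^{1/2} if n is odd. -/

import Mathlib

open Finset

noncomputable def norm2 {n : ℕ} (x : Fin n → ℝ) : ℝ :=
  (∑ m, (x m) ^ 2) ^ ((1 : ℝ) / 2)

/-!
Radon's theorem splits `n + 2` of the points into parts `A` and `B` whose convex hulls share a
point `c = ∑ α a • a = ∑ β b • b`. By the parallel axis theorem the `α ⊗ β`-mean of `‖a - b‖²`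
is `V_A + V_B`, where `V_A = ∑ α a * ‖a - c‖²`, while the `α ⊗ α`-mean of `‖a - a'‖²` is
`2 V_A`. The first mean is at least `d²`; the second is at most `D² (1 - ∑ α a ²)`, since the
diagonal terms vanish, hence at most `D² (1 - 1 / #A)` by Cauchy–Schwarz. So
`2 d² ≤ D² (2 - 1 / #A - 1 / #B)`, and under `#A + #B = n + 2` the right side is largest for
`#A = #B`, or `|#A - #B| = 1` when `n` is odd.
-/

open Module

namespace Finset

variable {𝕜 E : Type*} [Field 𝕜] [LinearOrder 𝕜] [IsStrictOrderedRing 𝕜]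
  [AddCommGroup E] [Module 𝕜 E] [FiniteDimensional 𝕜 E] [DecidableEq E]

theorem radon_partition (T : Finset E) (hT : finrank 𝕜 E + 2 ≤ #T) :
    ∃ A ⊆ T, (convexHull 𝕜 (A : Set E) ∩ convexHull 𝕜 ↑(T \ A)).Nonempty := by
  classical
  have hdep : ¬ AffineIndependent 𝕜 ((↑) : T → E) := fun h => by
    have := h.card_le_finrank_succ.trans (Nat.succ_le_succ (Submodule.finrank_le _))
    simp only [Fintype.card_coe] at this
    omega
  obtain ⟨I, hI⟩ := Convex.radon_partition hdep
  refine ⟨(univ.filter (· ∈ I)).map (Function.Embedding.subtype _), ?_, ?_⟩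
  · simp +contextual [subset_iff]
  · convert hI using 3 <;> ext x
    · simp
    · simpa using ⟨fun ⟨h, h'⟩ => ⟨h, h' h⟩, fun ⟨h, h'⟩ => ⟨h, fun _ => h'⟩⟩

end Finset

section

variable {E : Type*} [SeminormedAddCommGroup E] {s : Finset E} {w : E → ℝ}

theorem sum_sum_mul_norm_sub_sq_le (hw₀ : ∀ y ∈ s, 0 ≤ w y) (hw : ∑ y ∈ s, w y = 1) {D : ℝ}
    (hD : ∀ y ∈ s, ∀ z ∈ s, ‖y - z‖ ≤ D) :
    ∑ y ∈ s, ∑ z ∈ s, w y * w z * ‖y - z‖ ^ 2 ≤ D ^ 2 * (1 - 1 / #s) := by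
  classical
  have hrow : ∀ y ∈ s, ∑ z ∈ s, w y * w z * ‖y - z‖ ^ 2 ≤ D ^ 2 * (w y - w y ^ 2) := by
    intro y hy
    calc ∑ z ∈ s, w y * w z * ‖y - z‖ ^ 2 = ∑ z ∈ s.erase y, w y * w z * ‖y - z‖ ^ 2 := by
          rw [← add_sum_erase _ _ hy, sub_self, norm_zero]; ring
      _ ≤ ∑ z ∈ s.erase y, w y * w z * D ^ 2 := by
          refine sum_le_sum fun z hz => ?_
          have hzs := mem_of_mem_erase hz
          gcongr
          · exact mul_nonneg (hw₀ y hy) (hw₀ z hzs)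
          · exact hD y hy z hzs
      _ = D ^ 2 * (w y - w y ^ 2) := by
          rw [← sum_mul, ← mul_sum, sum_erase_eq_sub hy, hw]; ring
  have hsq : 1 / (#s : ℝ) ≤ ∑ y ∈ s, w y ^ 2 :=
    div_le_of_le_mul₀ (Nat.cast_nonneg _) (sum_nonneg fun y _ => sq_nonneg _)
      (by rw [mul_comm]; simpa [hw] using sq_sum_le_card_mul_sum_sq (s := s) (f := w))
  calc ∑ y ∈ s, ∑ z ∈ s, w y * w z * ‖y - z‖ ^ 2 ≤ ∑ y ∈ s, D ^ 2 * (w y - w y ^ 2) :=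
        sum_le_sum hrow
    _ = D ^ 2 * (1 - ∑ y ∈ s, w y ^ 2) := by rw [← mul_sum, sum_sub_distrib, hw]
    _ ≤ D ^ 2 * (1 - 1 / #s) := by gcongr

end

section

variable {E : Type*} [NormedAddCommGroup E] [InnerProductSpace ℝ E]
  {s t : Finset E} {w v : E → ℝ} {c : E}

theorem sum_mul_norm_sub_sq (hw : ∑ y ∈ s, w y = 1) (hc : ∑ y ∈ s, w y • y = c) (x : E) :
    ∑ y ∈ s, w y * ‖y - x‖ ^ 2 = ∑ y ∈ s, w y * ‖y - c‖ ^ 2 + ‖c - x‖ ^ 2 := by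
  have hcentred : ∑ y ∈ s, w y • (y - c) = 0 := by
    simp only [smul_sub, sum_sub_distrib, hc, ← sum_smul, hw, one_smul, sub_self]
  have hinner : ∑ y ∈ s, w y * inner ℝ (y - c) (c - x) = 0 := by
    simp only [← real_inner_smul_left, ← sum_inner, hcentred, inner_zero_left]
  calc ∑ y ∈ s, w y * ‖y - x‖ ^ 2
      = ∑ y ∈ s, (w y * ‖y - c‖ ^ 2 + 2 * (w y * inner ℝ (y - c) (c - x))
          + w y * ‖c - x‖ ^ 2) := by
        refine sum_congr rfl fun y _ => ?_
        rw [← sub_add_sub_cancel y c x, norm_add_sq_real]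
        ring
    _ = ∑ y ∈ s, w y * ‖y - c‖ ^ 2 + ‖c - x‖ ^ 2 := by
        rw [sum_add_distrib, sum_add_distrib, ← mul_sum, hinner, ← sum_mul, hw]
        ring

theorem sum_sum_mul_norm_sub_sq (hw : ∑ y ∈ s, w y = 1) (hc : ∑ y ∈ s, w y • y = c)
    (hv : ∑ z ∈ t, v z = 1) :
    ∑ y ∈ s, ∑ z ∈ t, w y * v z * ‖y - z‖ ^ 2
      = ∑ y ∈ s, w y * ‖y - c‖ ^ 2 + ∑ z ∈ t, v z * ‖z - c‖ ^ 2 := by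
  calc ∑ y ∈ s, ∑ z ∈ t, w y * v z * ‖y - z‖ ^ 2
      = ∑ z ∈ t, v z * ∑ y ∈ s, w y * ‖y - z‖ ^ 2 := by
        rw [sum_comm]
        exact sum_congr rfl fun z _ => by rw [mul_sum]; exact sum_congr rfl fun y _ => by ring
    _ = ∑ z ∈ t, (v z * ∑ y ∈ s, w y * ‖y - c‖ ^ 2 + v z * ‖z - c‖ ^ 2) := by
        refine sum_congr rfl fun z _ => ?_
        rw [sum_mul_norm_sub_sq hw hc, norm_sub_rev, mul_add]
    _ = _ := by rw [sum_add_distrib, ← sum_mul, hv, one_mul]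

theorem two_mul_sq_le_of_convexHull_inter_nonempty {A B : Finset E}
    (hAB : (convexHull ℝ (A : Set E) ∩ convexHull ℝ ↑B).Nonempty) {d D : ℝ} (hd : 0 ≤ d)
    (hdAB : ∀ y ∈ A, ∀ z ∈ B, d ≤ ‖y - z‖) (hDA : ∀ y ∈ A, ∀ z ∈ A, ‖y - z‖ ≤ D)
    (hDB : ∀ y ∈ B, ∀ z ∈ B, ‖y - z‖ ≤ D) :
    2 * d ^ 2 ≤ D ^ 2 * (2 - 1 / #A - 1 / #B) := by
  obtain ⟨c, hcA, hcB⟩ := hAB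
  obtain ⟨α, hα₀, hα, hαc⟩ := mem_convexHull'.1 hcA
  obtain ⟨β, hβ₀, hβ, hβc⟩ := mem_convexHull'.1 hcB
  have hcross : d ^ 2 ≤ ∑ y ∈ A, ∑ z ∈ B, α y * β z * ‖y - z‖ ^ 2 :=
    calc d ^ 2 = ∑ y ∈ A, ∑ z ∈ B, α y * β z * d ^ 2 := by
          simp only [← sum_mul, ← mul_sum, hα, hβ, mul_one, one_mul]
      _ ≤ ∑ y ∈ A, ∑ z ∈ B, α y * β z * ‖y - z‖ ^ 2 := by
          refine sum_le_sum fun y hy => sum_le_sum fun z hz => ?_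
          have := mul_nonneg (hα₀ y hy) (hβ₀ z hz)
          gcongr
          exact hdAB y hy z hz
  have hA := sum_sum_mul_norm_sub_sq_le hα₀ hα hDA
  have hB := sum_sum_mul_norm_sub_sq_le hβ₀ hβ hDB
  rw [sum_sum_mul_norm_sub_sq hα hαc hβ] at hcross
  rw [sum_sum_mul_norm_sub_sq hα hαc hα] at hA
  rw [sum_sum_mul_norm_sub_sq hβ hβc hβ] at hB
  linarith

end

noncomputable def schutteConst (n : ℕ) : ℝ :=
  if Even n then 1 + 2 / (n : ℝ) else 1 + 2 / ((n : ℝ) - ((n : ℝ) + 2)⁻¹)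

theorem one_le_sq_sub_of_odd_add {p q : ℕ} (h : Odd (p + q)) : (1 : ℝ) ≤ ((p : ℝ) - q) ^ 2 := by
  have hne : (p : ℤ) ≠ q := by
    rintro h'
    rw [Int.ofNat_inj.1 h'] at h
    exact Nat.not_even_iff_odd.2 h ⟨q, rfl⟩
  have : (1 : ℤ) ≤ ((p : ℤ) - q) ^ 2 := by
    rcases lt_or_gt_of_ne hne with hlt | hlt <;> nlinarith
  exact_mod_cast this

theorem sub_inv_add_two_pos {n : ℕ} (hn : 1 ≤ n) : 0 < (n : ℝ) - ((n : ℝ) + 2)⁻¹ := by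
  have : (1 : ℝ) ≤ n := by exact_mod_cast hn
  have : ((n : ℝ) + 2)⁻¹ < 1 := inv_lt_one_of_one_lt₀ (by linarith)
  linarith

theorem schutteConst_nonneg (n : ℕ) : 0 ≤ schutteConst n := by
  unfold schutteConst
  split_ifs with hn
  · positivity
  · have := sub_inv_add_two_pos (Nat.not_even_iff_odd.1 hn).pos
    positivity

theorem schutteConst_mul_le {n p q : ℕ} (hp : 0 < p) (hq : 0 < q) (hpq : p + q = n + 2) :
    schutteConst n * (2 - 1 / p - 1 / q) ≤ 2 := by
  have hp' : (0 : ℝ) < p := by exact_mod_cast hp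
  have hq' : (0 : ℝ) < q := by exact_mod_cast hq
  have hpq' : (p : ℝ) + q = n + 2 := by exact_mod_cast hpq
  unfold schutteConst
  split_ifs with hn
  · rcases Nat.eq_zero_or_pos n with rfl | hn0
    · obtain ⟨rfl, rfl⟩ : p = 1 ∧ q = 1 := by omega
      norm_num
    · have : (0 : ℝ) < n := by exact_mod_cast hn0
      field_simp
      nlinarith [sq_nonneg ((p : ℝ) - q)]
  · have hodd : Odd n := Nat.not_even_iff_odd.1 hn
    have hsq := one_le_sq_sub_of_odd_add (hpq ▸ hodd.add_even even_two)
    have hn1 : (1 : ℝ) ≤ n := by exact_mod_cast hodd.pos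
    have hM : (0 : ℝ) < n ^ 2 + 2 * n - 1 := by nlinarith
    have hc : 1 + 2 / ((n : ℝ) - ((n : ℝ) + 2)⁻¹) = (n + 1) * (n + 3) / (n ^ 2 + 2 * n - 1) := by
      field_simp
      rw [one_add_div (by nlinarith)]
      ring
    have hX : 2 - 1 / (p : ℝ) - 1 / q = (2 * p * q - (n + 2)) / (p * q) := by
      field_simp; linarith
    have h4 : 4 * (p : ℝ) * q ≤ (n + 1) * (n + 3) := by nlinarith
    rw [hc, hX, div_mul_div_comm, div_le_iff₀ (by positivity)]
    nlinarith [mul_le_mul_of_nonneg_left h4 (by positivity : (0 : ℝ) ≤ n + 2)]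

section

variable {E : Type*} [NormedAddCommGroup E] [InnerProductSpace ℝ E]

theorem schutteConst_mul_sq_le [FiniteDimensional ℝ E] (S : Finset E)
    (hS : finrank ℝ E + 2 ≤ #S) {d D : ℝ} (hd : 0 ≤ d)
    (hdS : ∀ x ∈ S, ∀ y ∈ S, x ≠ y → d ≤ ‖x - y‖) (hDS : ∀ x ∈ S, ∀ y ∈ S, ‖x - y‖ ≤ D) :
    schutteConst (finrank ℝ E) * d ^ 2 ≤ D ^ 2 := by
  classical
  obtain ⟨T, hTS, hT⟩ := exists_subset_card_eq hS
  obtain ⟨A, hAT, hAB⟩ := T.radon_partition (𝕜 := ℝ) hT.ge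
  have hA : 0 < #A := card_pos.2 <| coe_nonempty.1 <|
    (convexHull_nonempty_iff (𝕜 := ℝ)).1 (hAB.mono Set.inter_subset_left)
  have hB : 0 < #(T \ A) := card_pos.2 <| coe_nonempty.1 <|
    (convexHull_nonempty_iff (𝕜 := ℝ)).1 (hAB.mono Set.inter_subset_right)
  have hsq := two_mul_sq_le_of_convexHull_inter_nonempty hAB hd
    (fun y hy z hz => hdS y (hTS (hAT hy)) z (hTS (mem_sdiff.1 hz).1)
      fun h => (mem_sdiff.1 hz).2 (h ▸ hy))
    (fun y hy z hz => hDS y (hTS (hAT hy)) z (hTS (hAT hz)))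
    (fun y hy z hz => hDS y (hTS (mem_sdiff.1 hy).1) z (hTS (mem_sdiff.1 hz).1))
  have hconst := schutteConst_mul_le hA hB (by rw [add_comm, card_sdiff_add_card_eq_card hAT, hT])
  nlinarith [mul_le_mul_of_nonneg_left hsq (schutteConst_nonneg (finrank ℝ E)),
    mul_le_mul_of_nonneg_left hconst (sq_nonneg D)]

theorem sqrt_schutteConst_le_div [FiniteDimensional ℝ E] (S : Finset E)
    (hS : finrank ℝ E + 2 ≤ #S) :
    √(schutteConst (finrank ℝ E)) ≤ sSup {d : ℝ | ∃ x ∈ S, ∃ y ∈ S, d = ‖x - y‖} /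
      sInf {d : ℝ | ∃ x ∈ S, ∃ y ∈ S, x ≠ y ∧ d = ‖x - y‖} := by
  set D := sSup {d : ℝ | ∃ x ∈ S, ∃ y ∈ S, d = ‖x - y‖}
  set d := sInf {d : ℝ | ∃ x ∈ S, ∃ y ∈ S, x ≠ y ∧ d = ‖x - y‖}
  have hfin : {d : ℝ | ∃ x ∈ S, ∃ y ∈ S, d = ‖x - y‖}.Finite :=
    (S.finite_toSet.image2 (fun x y => ‖x - y‖) S.finite_toSet).subset
      fun _ ⟨x, hx, y, hy, h⟩ => ⟨x, hx, y, hy, h.symm⟩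
  have hfin' : {d : ℝ | ∃ x ∈ S, ∃ y ∈ S, x ≠ y ∧ d = ‖x - y‖}.Finite :=
    hfin.subset fun _ ⟨x, hx, y, hy, _, h⟩ => ⟨x, hx, y, hy, h⟩
  obtain ⟨x, hx, y, hy, hxy⟩ := one_lt_card.1 (by omega : 1 < #S)
  obtain ⟨x', hx', y', hy', hxy', hd⟩ : d ∈ _ :=
    Set.Nonempty.csInf_mem ⟨_, x, hx, y, hy, hxy, rfl⟩ hfin'
  have hd0 : 0 < d := hd ▸ norm_pos_iff.2 (sub_ne_zero.2 hxy')
  have hD0 : 0 ≤ D := hd0.le.trans (hd ▸ le_csSup hfin.bddAbove ⟨x', hx', y', hy', rfl⟩)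
  have key := schutteConst_mul_sq_le S hS hd0.le
    (fun x hx y hy hxy => csInf_le hfin'.bddBelow ⟨x, hx, y, hy, hxy, rfl⟩)
    (fun x hx y hy => le_csSup hfin.bddAbove ⟨x, hx, y, hy, rfl⟩)
  rw [Real.sqrt_le_left (by positivity), div_pow, le_div_iff₀ (by positivity)]
  exact key

end

theorem norm2_eq_norm_toLp {n : ℕ} (x : Fin n → ℝ) : norm2 x = ‖WithLp.toLp 2 x‖ := by
  simp [norm2, EuclideanSpace.norm_eq, Real.sqrt_eq_rpow]

theorem stmt5 (n : ℕ) (S : Finset (Fin n → ℝ)) (hS : n + 2 ≤ S.card) :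
    (if Even n then (1 + 2 / (n : ℝ)) ^ ((1 : ℝ) / 2)
      else (1 + 2 / ((n : ℝ) - ((n : ℝ) + 2)⁻¹)) ^ ((1 : ℝ) / 2)) ≤
    sSup {d : ℝ | ∃ x ∈ S, ∃ y ∈ S, d = norm2 (x - y)} /
      sInf {d : ℝ | ∃ x ∈ S, ∃ y ∈ S, x ≠ y ∧ d = norm2 (x - y)} := by
  have hlhs : (if Even n then (1 + 2 / (n : ℝ)) ^ ((1 : ℝ) / 2)
      else (1 + 2 / ((n : ℝ) - ((n : ℝ) + 2)⁻¹)) ^ ((1 : ℝ) / 2)) = √(schutteConst n) := by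
    unfold schutteConst; split_ifs <;> rw [Real.sqrt_eq_rpow]
  have h := sqrt_schutteConst_le_div (S.image (WithLp.toLp 2)) (by
    rwa [finrank_euclideanSpace_fin, card_image_of_injective _ (WithLp.toLp_injective 2)])
  rw [finrank_euclideanSpace_fin] at h
  rw [hlhs]
  convert h using 4 <;> ext <;> simp [norm2_eq_norm_toLp]
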